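/- arXiv:2401.09665 — 5 statements merged into one kernel-verified Lean document; each statement's English description precedes it below -/
import Mathlib

section
/- For all α_2 > α_1 > 0 one has the strict Loewner ordering V_x(α_2) <_L V_x(α_1) <_L V_x(0); in particular the asymptotic sampling covariance of the SRRW strictly decreases in α. -/
/-!
Writing `w_i(α) = (1 + λ_i) / ((1 - λ_i) (2α(1 + λ_i) + 2 - s))`, for `0 ≤ α < β` one has
`V_x(α) - V_x(β) = ∑ (w_i(α) - w_i(β)) u_i u_iᵀ`. Each weight is strictly decreasing on `α ≥ 0`
(as `1 + λ_i > 0` and the denominator stays positive for `s < 2`), so this is a positive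
combination of rank-one positive semidefinite matrices; it is nonzero because its trace
`∑ (w_i(α) - w_i(β)) ‖u_i‖²` is positive.
-/

open Matrix

noncomputable section

/-- Strict Loewner ordering: `M₁ <_L M₂` iff `M₂ − M₁` is positive semidefinite and `M₁ ≠ M₂`. -/
def LoewnerLT {n : ℕ} (M₁ M₂ : Matrix (Fin n) (Fin n) ℝ) : Prop :=
  (M₂ - M₁).PosSemidef ∧ M₁ ≠ M₂

section RankOneSums

variable {ι n : Type*} [Fintype ι] [Fintype n] (u : ι → n → ℝ)

theorem posSemidef_sum_smul_vecMulVec_self {d : ι → ℝ} (hd : ∀ i, 0 ≤ d i) :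
    (∑ i, d i • vecMulVec (u i) (u i)).PosSemidef :=
  posSemidef_sum _ fun i _ => (posSemidef_vecMulVec_self_star (u i)).smul (hd i)

theorem trace_sum_smul_vecMulVec_self_pos [Nonempty ι] (hu : ∀ i, u i ≠ 0)
    {d : ι → ℝ} (hd : ∀ i, 0 < d i) :
    0 < (∑ i, d i • vecMulVec (u i) (u i)).trace := by
  simp only [trace_sum, trace_smul, trace_vecMulVec, smul_eq_mul]
  exact Finset.sum_pos (fun i _ => mul_pos (hd i) (dotProduct_self_star_pos_iff.mpr (hu i)))
    Finset.univ_nonempty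

end RankOneSums

theorem loewnerLT_sum_smul_vecMulVec_self {ι : Type*} [Fintype ι] [Nonempty ι] {n : ℕ}
    {u : ι → Fin n → ℝ} (hu : ∀ i, u i ≠ 0) {a b : ι → ℝ} (hab : ∀ i, b i < a i) :
    LoewnerLT (∑ i, b i • vecMulVec (u i) (u i)) (∑ i, a i • vecMulVec (u i) (u i)) := by
  have hsub : ∑ i, a i • vecMulVec (u i) (u i) - ∑ i, b i • vecMulVec (u i) (u i) =
      ∑ i, (a i - b i) • vecMulVec (u i) (u i) := by
    simp only [← Finset.sum_sub_distrib, sub_smul]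
  refine ⟨hsub ▸ posSemidef_sum_smul_vecMulVec_self u fun i => (sub_pos.mpr (hab i)).le, ?_⟩
  intro heq
  have htrace := trace_sum_smul_vecMulVec_self_pos u hu fun i => sub_pos.mpr (hab i)
  rw [← hsub, heq, sub_self, trace_zero] at htrace
  exact htrace.false

theorem strictAntiOn_sampling_weight {l s : ℝ} (hl₁ : -1 < l) (hl₂ : l < 1) (hs : s < 2) :
    StrictAntiOn (fun α : ℝ => 1 / (2 * α * (1 + l) + 2 - s) * ((1 + l) / (1 - l)))
      (Set.Ici 0) := by
  intro α (hα : 0 ≤ α) β _ hαβ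
  have hdenα : 0 < 2 * α * (1 + l) + 2 - s := by nlinarith
  have hdenlt : 2 * α * (1 + l) + 2 - s < 2 * β * (1 + l) + 2 - s := by nlinarith
  exact mul_lt_mul_of_pos_right (one_div_lt_one_div_of_lt hdenα hdenlt)
    (div_pos (by linarith) (by linarith))

/-- **Strict monotone decrease of the SRRW asymptotic sampling covariance in `α`.**
For `V_x(α) = ∑_{i=1}^{N−1} [1/(2α(1+λ_i)+2−s)]·[(1+λ_i)/(1−λ_i)]·u_i u_iᵀ` with
`λ_i ∈ (−1,1)`, nonzero vectors `u_i` and `s ∈ {0,1}`: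
for all `α₂ > α₁ > 0`, `V_x(α₂) <_L V_x(α₁) <_L V_x(0)`. -/
theorem srrw_sampling_covariance_strictly_decreasing
    {N : ℕ} (hN : 2 ≤ N)
    (lam : Fin (N - 1) → ℝ) (hlam : ∀ i, -1 < lam i ∧ lam i < 1)
    (u : Fin (N - 1) → (Fin N → ℝ)) (hu : ∀ i, u i ≠ 0)
    (s : ℝ) (hs : s = 0 ∨ s = 1)
    (Vx : ℝ → Matrix (Fin N) (Fin N) ℝ)
    (hVx : ∀ α, Vx α =
      ∑ i, ((1 / (2 * α * (1 + lam i) + 2 - s)) * ((1 + lam i) / (1 - lam i))) •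
        vecMulVec (u i) (u i)) :
    ∀ α₁ α₂ : ℝ, 0 < α₁ → α₁ < α₂ →
      LoewnerLT (Vx α₂) (Vx α₁) ∧ LoewnerLT (Vx α₁) (Vx 0) := by
  have : Nonempty (Fin (N - 1)) := ⟨⟨0, by omega⟩⟩
  have hs₂ : s < 2 := by rcases hs with rfl | rfl <;> norm_num
  have hweight i := strictAntiOn_sampling_weight (hlam i).1 (hlam i).2 hs₂
  have hdecr {α β : ℝ} (hα : 0 ≤ α) (hαβ : α < β) : LoewnerLT (Vx β) (Vx α) := by
    rw [hVx, hVx]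
    exact loewnerLT_sum_smul_vecMulVec_self hu fun i =>
      hweight i hα (Set.mem_Ici.mpr (hα.trans hαβ.le)) hαβ
  intro α₁ α₂ h₁ h₁₂
  exact ⟨hdecr h₁.le h₁₂, hdecr le_rfl h₁⟩
end
end

section
/- Spectral identity for the slow-timescale noise covariance: with B = J_12(α) J_22(α)^{−1}, one has U_11 − B U_21 − U_12 B^T + B U_22 B^T = Σ_{i=1}^{N−1} [1/(α(1+λ_i)+1)^2]·[(1+λ_i)/(1−λ_i)]·H^T u_i u_i^T H. -/
/-! With `S = U_22`, the blocks are `U_11 = Hᵀ S H`, `U_12 = Hᵀ S` and `U_21 = S H`, so the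
left-hand side is the congruence `(Hᵀ - B) S (Hᵀ - B)ᵀ = ∑ κ_i ((Hᵀ - B) u_i)((Hᵀ - B) u_i)ᵀ`,
where `κ_i = (1+λ_i)/(1-λ_i)`. On each `u_i`, `J_22` acts as `-(α(1+λ_i)+1)` (the `μ 1ᵀ` term dies
because `1ᵀ u_i = 0`) and `J_12` as `-α(1+λ_i) Hᵀ`, so `(Hᵀ - B) u_i = (α(1+λ_i)+1)⁻¹ Hᵀ u_i`. -/

open Matrix

namespace Matrix

variable {l m : Type*} {R : Type*} [CommRing R]

theorem mul_vecMulVec_self_mul_transpose [Fintype m] (A : Matrix l m R) (v : m → R) :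
    A * vecMulVec v v * Aᵀ = vecMulVec (A *ᵥ v) (A *ᵥ v) := by
  rw [mul_vecMulVec, vecMulVec_mul, vecMul_transpose]

theorem mul_sum_smul_vecMulVec_self_mul_transpose [Fintype m] {ι : Type*} (s : Finset ι)
    (κ : ι → R) (u : ι → m → R) (A : Matrix l m R) :
    A * (∑ i ∈ s, κ i • vecMulVec (u i) (u i)) * Aᵀ =
      ∑ i ∈ s, κ i • vecMulVec (A *ᵥ u i) (A *ᵥ u i) := by
  simp only [Matrix.mul_sum, Matrix.sum_mul, Matrix.mul_smul, Matrix.smul_mul,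
    mul_vecMulVec_self_mul_transpose]

theorem transpose_sum_smul_vecMulVec_self {ι : Type*} (s : Finset ι) (κ : ι → R)
    (u : ι → m → R) :
    (∑ i ∈ s, κ i • vecMulVec (u i) (u i))ᵀ = ∑ i ∈ s, κ i • vecMulVec (u i) (u i) := by
  simp only [transpose_sum, transpose_smul, transpose_vecMulVec]

theorem sub_mul_mul_transpose_sub [Fintype m] (A B : Matrix l m R) {S : Matrix m m R}
    (hS : Sᵀ = S) :
    (A - B) * S * (A - B)ᵀ = A * S * Aᵀ - B * (A * S)ᵀ - A * S * Bᵀ + B * S * Bᵀ := by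
  rw [transpose_mul, hS, transpose_sub]
  simp only [Matrix.sub_mul, Matrix.mul_sub, Matrix.mul_assoc]
  abel

theorem inv_mulVec_eq_inv_smul_of_mulVec_eq_smul {n K : Type*} [Fintype n] [DecidableEq n]
    [Field K] {A : Matrix n n K} (hA : IsUnit A.det) {c : K} (hc : c ≠ 0) {v : n → K}
    (hv : A *ᵥ v = c • v) : A⁻¹ *ᵥ v = c⁻¹ • v := by
  have h : c • (A⁻¹ *ᵥ v) = v := by
    rw [← mulVec_smul, ← hv, mulVec_mulVec, nonsing_inv_mul _ hA, one_mulVec]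
  rw [← h, smul_smul, inv_mul_cancel₀ hc, one_smul, h]

end Matrix

section Eigenvector

variable {n d : Type*} [Fintype n] [DecidableEq n] {R : Type*} [CommRing R] {α lam : R}
  {P : Matrix n n R} {u : n → R}

theorem mulVec_eq_neg_smul_of_transpose_eigenvector (μ : n → R)
    (hu_eig : Pᵀ *ᵥ u = lam • u) (hu_sum : ∑ j, u j = 0) :
    ((2 * α) • vecMulVec μ (fun _ => (1 : R)) - α • Pᵀ - (α + 1) • (1 : Matrix n n R)) *ᵥ u =
      -(α * (1 + lam) + 1) • u := by
  have h_rank_one : vecMulVec μ (fun _ => (1 : R)) *ᵥ u = 0 := by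
    rw [vecMulVec_mulVec]
    simp [dotProduct, hu_sum]
  simp only [sub_mulVec, smul_mulVec, h_rank_one, hu_eig, one_mulVec, smul_zero]
  module

theorem mulVec_eq_neg_smul_transpose_mulVec_of_transpose_eigenvector (H : Matrix n d R)
    (hu_eig : Pᵀ *ᵥ u = lam • u) :
    (-α • (Hᵀ * (Pᵀ + 1))) *ᵥ u = -(α * (1 + lam)) • (Hᵀ *ᵥ u) := by
  rw [smul_mulVec, ← mulVec_mulVec, add_mulVec, hu_eig, one_mulVec, mulVec_add, mulVec_smul]
  module

end Eigenvector

theorem sub_mul_inv_mulVec_eq_inv_smul_of_transpose_eigenvector {n d K : Type*} [Fintype n]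
    [DecidableEq n] [Field K] {α lam : K} {P : Matrix n n K} {u : n → K} (μ : n → K)
    (H : Matrix n d K)
    (hJ22 : IsUnit ((2 * α) • vecMulVec μ (fun _ => (1 : K)) - α • Pᵀ - (α + 1) • 1).det)
    (hc : α * (1 + lam) + 1 ≠ 0) (hu_eig : Pᵀ *ᵥ u = lam • u) (hu_sum : ∑ j, u j = 0) :
    (Hᵀ - (-α • (Hᵀ * (Pᵀ + 1))) *
        ((2 * α) • vecMulVec μ (fun _ => (1 : K)) - α • Pᵀ - (α + 1) • 1)⁻¹) *ᵥ u =
      (α * (1 + lam) + 1)⁻¹ • (Hᵀ *ᵥ u) := by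
  have h_inv := inv_mulVec_eq_inv_smul_of_mulVec_eq_smul hJ22 (neg_ne_zero.mpr hc)
    (mulVec_eq_neg_smul_of_transpose_eigenvector μ hu_eig hu_sum)
  rw [sub_mulVec, ← mulVec_mulVec, h_inv, mulVec_smul,
    mulVec_eq_neg_smul_transpose_mulVec_of_transpose_eigenvector H hu_eig, smul_smul]
  have h_coeff : 1 - (-(α * (1 + lam) + 1))⁻¹ * -(α * (1 + lam)) = (α * (1 + lam) + 1)⁻¹ := by
    field_simp
    ring
  rw [← h_coeff, sub_smul, one_smul]

theorem srrw_slow_timescale_noise_covariance_identity_general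
    {N D : ℕ}
    (α : ℝ) (hα : 0 ≤ α)
    (P : Matrix (Fin N) (Fin N) ℝ) (μ : Fin N → ℝ)
    (lam : Fin (N - 1) → ℝ) (hlam : ∀ i, -1 < lam i ∧ lam i < 1)
    (u : Fin (N - 1) → (Fin N → ℝ))
    (hu_eig : ∀ i, Pᵀ *ᵥ u i = lam i • u i)
    (hu_sum : ∀ i, ∑ j, u i j = 0)
    (H : Matrix (Fin N) (Fin D) ℝ)
    (J12 : Matrix (Fin D) (Fin N) ℝ)
    (hJ12 : J12 = -α • (Hᵀ * (Pᵀ + 1)))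
    (J22 : Matrix (Fin N) (Fin N) ℝ)
    (hJ22 : J22 = (2 * α) • vecMulVec μ (fun _ => (1 : ℝ)) - α • Pᵀ - (α + 1) • (1 : Matrix (Fin N) (Fin N) ℝ))
    (hJ22_inv : IsUnit J22.det)
    (U11 : Matrix (Fin D) (Fin D) ℝ)
    (hU11 : U11 = ∑ i, ((1 + lam i) / (1 - lam i)) • (Hᵀ * vecMulVec (u i) (u i) * H))
    (U12 : Matrix (Fin D) (Fin N) ℝ)
    (hU12 : U12 = ∑ i, ((1 + lam i) / (1 - lam i)) • (Hᵀ * vecMulVec (u i) (u i)))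
    (U21 : Matrix (Fin N) (Fin D) ℝ) (hU21 : U21 = U12ᵀ)
    (U22 : Matrix (Fin N) (Fin N) ℝ)
    (hU22 : U22 = ∑ i, ((1 + lam i) / (1 - lam i)) • vecMulVec (u i) (u i))
    (B : Matrix (Fin D) (Fin N) ℝ) (hB : B = J12 * J22⁻¹) :
    U11 - B * U21 - U12 * Bᵀ + B * U22 * Bᵀ =
      ∑ i, ((1 / (α * (1 + lam i) + 1) ^ 2) * ((1 + lam i) / (1 - lam i))) •
        (Hᵀ * vecMulVec (u i) (u i) * H) := by
  subst hJ12 hJ22 hB hU11 hU12 hU21 hU22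
  set κ : Fin (N - 1) → ℝ := fun i => (1 + lam i) / (1 - lam i)
  set S := ∑ i, κ i • vecMulVec (u i) (u i)
  have hU11 : ∑ i, κ i • (Hᵀ * vecMulVec (u i) (u i) * H) = Hᵀ * S * Hᵀᵀ := by
    simp only [S, transpose_transpose, Matrix.mul_sum, Matrix.sum_mul, Matrix.mul_smul,
      Matrix.smul_mul]
  have hU12 : ∑ i, κ i • (Hᵀ * vecMulVec (u i) (u i)) = Hᵀ * S := by
    simp only [S, Matrix.mul_sum, Matrix.mul_smul]
  rw [hU11, hU12, ← sub_mul_mul_transpose_sub _ _ (transpose_sum_smul_vecMulVec_self _ _ _),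
    mul_sum_smul_vecMulVec_self_mul_transpose]
  refine Finset.sum_congr rfl fun i _ => ?_
  have hc : α * (1 + lam i) + 1 ≠ 0 :=
    (add_pos_of_nonneg_of_pos (mul_nonneg hα (by linarith [(hlam i).1])) one_pos).ne'
  rw [sub_mul_inv_mulVec_eq_inv_smul_of_transpose_eigenvector μ H hJ22_inv hc (hu_eig i)
    (hu_sum i), smul_vecMulVec, vecMulVec_smul, smul_smul,
    ← mul_vecMulVec_self_mul_transpose, transpose_transpose, smul_smul]
  congr 1
  change _ = _ * κ i
  field_simp

/-- **Spectral identity for the slow-timescale noise covariance.**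
With `B = J_12(α) J_22(α)⁻¹`, where `J_12(α) = −α Hᵀ(Pᵀ + I)` and
`J_22(α) = 2α μ 1ᵀ − α Pᵀ − (α+1) I`, one has
`U_11 − B U_21 − U_12 Bᵀ + B U_22 Bᵀ
  = ∑_{i=1}^{N−1} [1/(α(1+λ_i)+1)²]·[(1+λ_i)/(1−λ_i)]·Hᵀ u_i u_iᵀ H`. -/
theorem srrw_slow_timescale_noise_covariance_identity
    {N D : ℕ} (hN : 2 ≤ N) (hD : 1 ≤ D)
    (α : ℝ) (hα : 0 ≤ α)
    (P : Matrix (Fin N) (Fin N) ℝ) (μ : Fin N → ℝ)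
    (lam : Fin (N - 1) → ℝ) (hlam : ∀ i, -1 < lam i ∧ lam i < 1)
    (u : Fin (N - 1) → (Fin N → ℝ))
    (hu_eig : ∀ i, Pᵀ *ᵥ u i = lam i • u i)
    (hu_sum : ∀ i, ∑ j, u i j = 0)
    (H : Matrix (Fin N) (Fin D) ℝ)
    (J12 : Matrix (Fin D) (Fin N) ℝ)
    (hJ12 : J12 = -α • (Hᵀ * (Pᵀ + 1)))
    (J22 : Matrix (Fin N) (Fin N) ℝ)
    (hJ22 : J22 = (2 * α) • vecMulVec μ (fun _ => (1 : ℝ)) - α • Pᵀ - (α + 1) • (1 : Matrix (Fin N) (Fin N) ℝ))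
    (hJ22_inv : IsUnit J22.det)
    (U11 : Matrix (Fin D) (Fin D) ℝ)
    (hU11 : U11 = ∑ i, ((1 + lam i) / (1 - lam i)) • (Hᵀ * vecMulVec (u i) (u i) * H))
    (U12 : Matrix (Fin D) (Fin N) ℝ)
    (hU12 : U12 = ∑ i, ((1 + lam i) / (1 - lam i)) • (Hᵀ * vecMulVec (u i) (u i)))
    (U21 : Matrix (Fin N) (Fin D) ℝ) (hU21 : U21 = U12ᵀ)
    (U22 : Matrix (Fin N) (Fin N) ℝ)
    (hU22 : U22 = ∑ i, ((1 + lam i) / (1 - lam i)) • vecMulVec (u i) (u i))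
    (B : Matrix (Fin D) (Fin N) ℝ) (hB : B = J12 * J22⁻¹) :
    U11 - B * U21 - U12 * Bᵀ + B * U22 * Bᵀ =
      ∑ i, ((1 / (α * (1 + lam i) + 1) ^ 2) * ((1 + lam i) / (1 - lam i))) •
        (Hᵀ * vecMulVec (u i) (u i) * H) :=
  srrw_slow_timescale_noise_covariance_identity_general α hα P μ lam hlam u hu_eig hu_sum H J12 hJ12
    J22 hJ22 hJ22_inv U11 hU11 U12 hU12 U21 hU21 U22 hU22 B hB
end

section
/- The SRRW asymptotic covariance solves its Lyapunov equation: the matrix V = Σ_{i=1}^{N−1} [1/(2α(1+λ_i)+2−s)]·[(1+λ_i)/(1−λ_i)]·u_i u_i^T satisfies J_22(α) V + V J_22(α)^T + s·V = −U_22. -/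
open Matrix

noncomputable section

/-! Since `μ 1ᵀ` annihilates zero-sum vectors, each `u_i` is an eigenvector of `J_22(α)` with
eigenvalue `-(αλ_i + α + 1)`. Hence the Lyapunov operator `V ↦ J V + V Jᵀ + s V` multiplies
`u_i u_iᵀ` by `-(2α(1 + λ_i) + 2 - s)`, which is negative, and the coefficients of `V` are
chosen to invert exactly this factor. -/

namespace Matrix

variable {ι n R : Type*} [Fintype ι] [Fintype n] [CommRing R]

theorem vecMulVec_one_mulVec_of_sum_eq_zero (μ u : n → R) (hu : ∑ j, u j = 0) :
    vecMulVec μ (fun _ => (1 : R)) *ᵥ u = 0 := by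
  rw [vecMulVec_mulVec]
  simp [dotProduct, hu]

theorem srrw_jacobian_mulVec_eq_smul [DecidableEq n] (α lam : R) (μ u : n → R)
    (P : Matrix n n R) (hPu : Pᵀ *ᵥ u = lam • u) (hu : ∑ j, u j = 0) :
    ((2 * α) • vecMulVec μ (fun _ => (1 : R)) - α • Pᵀ - (α + 1) • (1 : Matrix n n R)) *ᵥ u =
      (-(α * lam + α + 1)) • u := by
  rw [sub_mulVec, sub_mulVec, smul_mulVec, smul_mulVec, smul_mulVec, one_mulVec,
    vecMulVec_one_mulVec_of_sum_eq_zero μ u hu, hPu, smul_smul]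
  module

theorem mul_vecMulVec_self_add_vecMulVec_self_mul_transpose {A : Matrix n n R} {v : n → R}
    {c : R} (hv : A *ᵥ v = c • v) :
    A * vecMulVec v v + vecMulVec v v * Aᵀ = (2 * c) • vecMulVec v v := by
  rw [mul_vecMulVec, vecMulVec_mul, vecMul_transpose, hv, smul_vecMulVec, vecMulVec_smul]
  module

theorem lyapunov_sum_smul_vecMulVec_self (A : Matrix n n R) (v : ι → n → R) (c a : ι → R)
    (s : R) (hv : ∀ i, A *ᵥ v i = c i • v i) :
    A * (∑ i, a i • vecMulVec (v i) (v i)) + (∑ i, a i • vecMulVec (v i) (v i)) * Aᵀ +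
        s • ∑ i, a i • vecMulVec (v i) (v i) =
      ∑ i, ((2 * c i + s) * a i) • vecMulVec (v i) (v i) := by
  rw [Matrix.mul_sum, Finset.sum_mul, Finset.smul_sum, ← Finset.sum_add_distrib,
    ← Finset.sum_add_distrib]
  refine Finset.sum_congr rfl fun i _ => ?_
  have h := mul_vecMulVec_self_add_vecMulVec_self_mul_transpose (hv i)
  rw [Matrix.mul_smul, Matrix.smul_mul, ← smul_add, h]
  module

end Matrix

theorem srrw_covariance_solves_lyapunov_general
    {N : ℕ}
    (α : ℝ) (hα : 0 ≤ α) (s : ℝ) (hs : s = 0 ∨ s = 1)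
    (P : Matrix (Fin N) (Fin N) ℝ) (μ : Fin N → ℝ)
    (lam : Fin (N - 1) → ℝ) (hlam : ∀ i, -1 < lam i ∧ lam i < 1)
    (u : Fin (N - 1) → (Fin N → ℝ))
    (hu_eig : ∀ i, Pᵀ *ᵥ u i = lam i • u i)
    (hu_sum : ∀ i, ∑ j, u i j = 0)
    (J22 : Matrix (Fin N) (Fin N) ℝ)
    (hJ22 : J22 = (2 * α) • vecMulVec μ (fun _ => (1 : ℝ)) - α • Pᵀ - (α + 1) • (1 : Matrix (Fin N) (Fin N) ℝ))
    (U22 : Matrix (Fin N) (Fin N) ℝ)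
    (hU22 : U22 = ∑ i, ((1 + lam i) / (1 - lam i)) • vecMulVec (u i) (u i))
    (V : Matrix (Fin N) (Fin N) ℝ)
    (hV : V = ∑ i, ((1 / (2 * α * (1 + lam i) + 2 - s)) * ((1 + lam i) / (1 - lam i))) •
      vecMulVec (u i) (u i)) :
    J22 * V + V * J22ᵀ + s • V = -U22 := by
  subst hJ22 hU22 hV
  rw [lyapunov_sum_smul_vecMulVec_self _ _ _ _ _
      fun i => srrw_jacobian_mulVec_eq_smul α (lam i) μ (u i) P (hu_eig i) (hu_sum i),
    ← Finset.sum_neg_distrib]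
  refine Finset.sum_congr rfl fun i _ => ?_
  rw [← neg_smul]
  congr 1
  have hd : 0 < 2 * α * (1 + lam i) + 2 - s := by
    have := mul_nonneg hα (neg_lt_iff_pos_add'.mp (hlam i).1).le
    rcases hs with rfl | rfl <;> nlinarith
  have hc : 2 * -(α * lam i + α + 1) + s = -(2 * α * (1 + lam i) + 2 - s) := by ring
  rw [hc, neg_mul, ← mul_assoc, mul_one_div_cancel hd.ne', one_mul]

/-- **The SRRW asymptotic covariance solves its Lyapunov equation.**
With `J_22(α) = 2α μ 1ᵀ − α Pᵀ − (α+1) I` and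
`U_22 = ∑_{i=1}^{N−1} ((1+λ_i)/(1−λ_i)) u_i u_iᵀ`, the matrix
`V = ∑_{i=1}^{N−1} [1/(2α(1+λ_i)+2−s)]·[(1+λ_i)/(1−λ_i)]·u_i u_iᵀ`
satisfies `J_22(α) V + V J_22(α)ᵀ + s·V = −U_22`. -/
theorem srrw_covariance_solves_lyapunov
    {N : ℕ} (hN : 2 ≤ N)
    (α : ℝ) (hα : 0 ≤ α) (s : ℝ) (hs : s = 0 ∨ s = 1)
    (P : Matrix (Fin N) (Fin N) ℝ) (μ : Fin N → ℝ)
    (lam : Fin (N - 1) → ℝ) (hlam : ∀ i, -1 < lam i ∧ lam i < 1)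
    (u : Fin (N - 1) → (Fin N → ℝ))
    (hu_eig : ∀ i, Pᵀ *ᵥ u i = lam i • u i)
    (hu_sum : ∀ i, ∑ j, u i j = 0)
    (J22 : Matrix (Fin N) (Fin N) ℝ)
    (hJ22 : J22 = (2 * α) • vecMulVec μ (fun _ => (1 : ℝ)) - α • Pᵀ - (α + 1) • (1 : Matrix (Fin N) (Fin N) ℝ))
    (U22 : Matrix (Fin N) (Fin N) ℝ)
    (hU22 : U22 = ∑ i, ((1 + lam i) / (1 - lam i)) • vecMulVec (u i) (u i))
    (V : Matrix (Fin N) (Fin N) ℝ)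
    (hV : V = ∑ i, ((1 / (2 * α * (1 + lam i) + 2 - s)) * ((1 + lam i) / (1 - lam i))) •
      vecMulVec (u i) (u i)) :
    J22 * V + V * J22ᵀ + s • V = -U22 :=
  srrw_covariance_solves_lyapunov_general α hα s hs P μ lam hlam u hu_eig hu_sum J22 hJ22 U22 hU22 V
    hV
end
end

section
/- Spectrum of the SRRW mean-field Jacobian: J_22(α) μ = −μ and J_22(α) u_i = −(α(1+λ_i)+1) u_i for each i ≤ N−1; consequently, since {u_1,…,u_{N−1}, μ} is a basis of ℝ^N, every eigenvalue of J_22(α) equals −1 or −(α(1+λ_i)+1) for some i, so for every α ≥ 0 the matrix J_22(α) is Hurwitz (all eigenvalues have strictly negative real part) and invertible. -/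
/-! The vectors `u_i` and `μ` are eigenvectors of `J_22(α)`, because `1ᵀ u_i = 0` and `1ᵀ μ = 1`
turn the rank-one term `2α μ 1ᵀ` into `0` resp. `2α μ`. Since they form a basis, `J_22(α)` is
diagonal in it, so its characteristic polynomial is `∏ (X - e_k)` and its determinant `∏ e_k`
over the eigenvalues `e_k ∈ {-1, -(α(1+λ_i)+1)}`, all of which are `≤ -1` when `α ≥ 0`. -/

open Matrix

noncomputable section

/-- A real square matrix is Hurwitz if all of its (complex) eigenvalues, i.e. the roots of its
characteristic polynomial over `ℂ`, have strictly negative real part. -/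
def IsHurwitz {D : ℕ} (M : Matrix (Fin D) (Fin D) ℝ) : Prop :=
  ∀ z : ℂ, ((M.map (Complex.ofReal)).charpoly).IsRoot z → z.re < 0

open Polynomial

namespace Matrix


variable {R n ι : Type*} [CommRing R] [Fintype n] [DecidableEq n] [Fintype ι] [DecidableEq ι]
  {M : Matrix n n R} {b : Module.Basis ι R (n → R)} {e : ι → R}

theorem toMatrix_toLin'_eq_diagonal_of_eigenbasis (h : ∀ k, M *ᵥ b k = e k • b k) :
    LinearMap.toMatrix b b M.toLin' = diagonal e := by
  ext i j
  rw [LinearMap.toMatrix_apply, toLin'_apply, h, map_smul, b.repr_self, diagonal_apply]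
  by_cases hij : i = j <;> simp [hij]

theorem charpoly_eq_prod_of_eigenbasis (h : ∀ k, M *ᵥ b k = e k • b k) :
    M.charpoly = ∏ k, (X - C (e k)) := by
  rw [← charpoly_toLin', ← LinearMap.charpoly_toMatrix _ b,
    toMatrix_toLin'_eq_diagonal_of_eigenbasis h, charpoly_diagonal]

theorem det_eq_prod_of_eigenbasis (h : ∀ k, M *ᵥ b k = e k • b k) :
    M.det = ∏ k, e k := by
  rw [← LinearMap.det_toLin', ← LinearMap.det_toMatrix b,
    toMatrix_toLin'_eq_diagonal_of_eigenbasis h, det_diagonal]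

theorem isRoot_charpoly_map_of_eigenbasis {S : Type*} [CommRing S] [IsDomain S]
    (f : R →+* S) (h : ∀ k, M *ᵥ b k = e k • b k) {z : S}
    (hz : ((M.map f).charpoly).IsRoot z) : ∃ k, z = f (e k) := by
  rw [charpoly_map, charpoly_eq_prod_of_eigenbasis h, IsRoot, eval_map, eval₂_finsetProd,
    Finset.prod_eq_zero_iff] at hz
  obtain ⟨k, -, hk⟩ := hz
  exact ⟨k, by simpa [sub_eq_zero] using hk⟩

end Matrix

theorem srrwJacobian_mulVec {n R : Type*} [Fintype n] [DecidableEq n] [CommRing R]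
    (α : R) (P : Matrix n n R) (μ v : n → R) :
    ((2 * α) • vecMulVec μ (fun _ => (1 : R)) - α • Pᵀ - (α + 1) • (1 : Matrix n n R)) *ᵥ v =
      (2 * α * ∑ j, v j) • μ - α • (Pᵀ *ᵥ v) - (α + 1) • v := by
  simp only [sub_mulVec, smul_mulVec, one_mulVec, vecMulVec_mulVec, dotProduct, one_mul,
    op_smul_eq_smul, smul_smul]

/-- **Spectrum of the SRRW mean-field Jacobian.**
With `J_22(α) = 2α μ 1ᵀ − α Pᵀ − (α+1) I`: `J_22(α) μ = −μ`,
`J_22(α) u_i = −(α(1+λ_i)+1) u_i` for each `i ≤ N−1`; consequently every (complex)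
eigenvalue of `J_22(α)` equals `−1` or `−(α(1+λ_i)+1)` for some `i`, so for every `α ≥ 0`
the matrix `J_22(α)` is Hurwitz and invertible. -/
theorem srrw_jacobian_spectrum
    {N : ℕ} (hN : 2 ≤ N) (α : ℝ) (hα : 0 ≤ α)
    (P : Matrix (Fin N) (Fin N) ℝ) (μ : Fin N → ℝ)
    (hμ_sum : ∑ i, μ i = 1) (hμ_eig : Pᵀ *ᵥ μ = μ)
    (lam : Fin (N - 1) → ℝ) (hlam : ∀ i, -1 < lam i ∧ lam i < 1)
    (u : Fin (N - 1) → (Fin N → ℝ))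
    (hu_eig : ∀ i, Pᵀ *ᵥ u i = lam i • u i)
    (hu_sum : ∀ i, ∑ j, u i j = 0)
    (hbasis : LinearIndependent ℝ (Sum.elim u (fun _ : Unit => μ)))
    (J22 : Matrix (Fin N) (Fin N) ℝ)
    (hJ22 : J22 = (2 * α) • vecMulVec μ (fun _ => (1 : ℝ)) - α • Pᵀ - (α + 1) • (1 : Matrix (Fin N) (Fin N) ℝ)) :
    J22 *ᵥ μ = -μ ∧
    (∀ i, J22 *ᵥ u i = (-(α * (1 + lam i) + 1)) • u i) ∧
    (∀ z : ℂ, ((J22.map (Complex.ofReal)).charpoly).IsRoot z →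
      z = -1 ∨ ∃ i, z = (↑(-(α * (1 + lam i) + 1)) : ℂ)) ∧
    IsHurwitz J22 ∧ IsUnit J22.det := by
  have hJμ : J22 *ᵥ μ = -μ := by
    rw [hJ22, srrwJacobian_mulVec, hμ_sum, hμ_eig]
    module
  have hJu (i) : J22 *ᵥ u i = (-(α * (1 + lam i) + 1)) • u i := by
    rw [hJ22, srrwJacobian_mulVec, hu_sum, hu_eig]
    module
  let e : Fin (N - 1) ⊕ Unit → ℝ := Sum.elim (fun i => -(α * (1 + lam i) + 1)) (fun _ => -1)
  have he_neg (k) : e k < 0 := by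
    rcases k with i | _
    · have h1 : 0 ≤ α * (1 + lam i) := mul_nonneg hα (by linarith [hlam i])
      simp only [e, Sum.elim_inl]
      linarith
    · exact neg_one_lt_zero
  let b := basisOfLinearIndependentOfCardEqFinrank hbasis (by simp; omega)
  have hJb (k) : J22 *ᵥ b k = e k • b k := by
    rcases k with i | _
    · simpa [b, e] using hJu i
    · simpa [b, e] using hJμ
  have hroots (z : ℂ) (hz : ((J22.map Complex.ofReal).charpoly).IsRoot z) :
      z = -1 ∨ ∃ i, z = (↑(-(α * (1 + lam i) + 1)) : ℂ) := by
    obtain ⟨i | _, rfl⟩ := isRoot_charpoly_map_of_eigenbasis Complex.ofRealHom hJb hz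
    · exact Or.inr ⟨i, rfl⟩
    · exact Or.inl (by simp [e])
  refine ⟨hJμ, hJu, hroots, ?_, ?_⟩
  · intro z hz
    obtain ⟨k, rfl⟩ := isRoot_charpoly_map_of_eigenbasis Complex.ofRealHom hJb hz
    exact he_neg k
  · rw [det_eq_prod_of_eigenbasis hJb, isUnit_iff_ne_zero, Finset.prod_ne_zero_iff]
    exact fun k _ => (he_neg k).ne
end
end

section
/- Jacobian of the SRRW stationary distribution at the target: the map π : ℝ^N_{>0} → ℝ^N defined by π_i[x] = (Σ_j μ_i P_{ij}(x_i/μ_i)^{−α}(x_j/μ_j)^{−α}) / (Σ_l Σ_j μ_l P_{lj}(x_l/μ_l)^{−α}(x_j/μ_j)^{−α}) is differentiable at x = μ with derivative Dπ(μ) = 2α μ 1^T − α P^T − α I; consequently, Dπ(μ) − I = 2α μ 1^T − α P^T − (α+1) I, and for any matrix H̄ ∈ ℝ^{N×D} with H̄^T μ = 0, the map x ↦ H̄^T π[x] has derivative −α H̄^T (P^T + I) at x = μ. -/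
/-!
At `x = μ` every factor `(x_k / μ_k)^{-α}` equals `1` and has gradient `-α e_k / μ_k`, so the
unnormalised weight `n_i(x) = ∑_j μ_i P_{ij} (x_i/μ_i)^{-α} (x_j/μ_j)^{-α}` equals `μ_i` and, by
reversibility and the row sums of `P`, has differential `-α ((Pᵀ + I) v)_i`. Summing over `i`, the
normaliser `∑_i n_i` equals `1` with differential `-2α ∑_j v_j`, and the quotient rule for
`π = (∑_i n_i)⁻¹ • n` gives `Dπ(μ) = -α (Pᵀ + I) + 2α μ 1ᵀ`. The term `μ 1ᵀ` is killed by `H̄ᵀ`.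
-/

open Matrix

noncomputable section

/-- The stationary distribution `π[x]` of the SRRW kernel:
`π_i[x] ∝ ∑_j μ_i P_{ij} (x_i/μ_i)^{−α}(x_j/μ_j)^{−α}`. -/
def srrwPi {N : ℕ} (P : Matrix (Fin N) (Fin N) ℝ) (μ : Fin N → ℝ) (α : ℝ)
    (x : Fin N → ℝ) : Fin N → ℝ := fun i =>
  (∑ j, μ i * P i j * (x i / μ i) ^ (-α) * (x j / μ j) ^ (-α)) /
    (∑ l, ∑ j, μ l * P l j * (x l / μ l) ^ (-α) * (x j / μ j) ^ (-α))

theorem hasFDerivAt_rpow_apply_div_self {ι : Type*} [Fintype ι] {μ : ι → ℝ} {k : ι}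
    (hμ : μ k ≠ 0) (p : ℝ) :
    HasFDerivAt (fun x : ι → ℝ => (x k / μ k) ^ p)
      ((p / μ k) • ContinuousLinearMap.proj (R := ℝ) (φ := fun _ : ι => ℝ) k) μ := by
  have h := (((hasFDerivAt_apply k μ).mul_const (μ k)⁻¹).rpow_const (p := p)
    (Or.inl (by simp [hμ])))
  simpa only [← div_eq_mul_inv, div_self hμ, Real.one_rpow, mul_one, smul_smul] using h

theorem HasFDerivAt.matrix_mulVec {𝕜 m n p : Type*} [NontriviallyNormedField 𝕜] [CompleteSpace 𝕜]
    [Fintype m] [Fintype n] [Fintype p] {f : (m → 𝕜) → n → 𝕜} {A : Matrix n m 𝕜} {x : m → 𝕜}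
    (hf : HasFDerivAt f A.mulVecLin.toContinuousLinearMap x) (M : Matrix p n 𝕜) :
    HasFDerivAt (fun y => M *ᵥ f y) (M * A).mulVecLin.toContinuousLinearMap x := by
  refine (M.mulVecLin.toContinuousLinearMap.hasFDerivAt.comp x hf).congr_fderiv ?_
  ext v
  simp

theorem sum_transpose_mulVec {R n : Type*} [CommSemiring R] [Fintype n] {P : Matrix n n R}
    (hP : ∀ i, ∑ j, P i j = 1) (v : n → R) :
    ∑ i, (Pᵀ *ᵥ v) i = ∑ i, v i := by
  have hP1 : P *ᵥ (fun _ => 1) = fun _ => 1 := by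
    funext i; simpa [mulVec, dotProduct] using hP i
  simpa [dotProduct, vecMul_transpose, hP1] using dotProduct_mulVec (fun _ => (1 : R)) Pᵀ v

section

variable {N : ℕ} {P : Matrix (Fin N) (Fin N) ℝ} {μ : Fin N → ℝ}

def srrwWeight (P : Matrix (Fin N) (Fin N) ℝ) (μ : Fin N → ℝ) (α : ℝ) (x : Fin N → ℝ) :
    Fin N → ℝ := fun i =>
  ∑ j, μ i * P i j * (x i / μ i) ^ (-α) * (x j / μ j) ^ (-α)

theorem srrwPi_eq_inv_sum_smul (α : ℝ) (x : Fin N → ℝ) :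
    srrwPi P μ α x = (∑ i, srrwWeight P μ α x i)⁻¹ • srrwWeight P μ α x := by
  funext i
  simp only [srrwPi, srrwWeight, Pi.smul_apply, smul_eq_mul, div_eq_inv_mul]

theorem srrwWeight_self (hμ : ∀ i, μ i ≠ 0) (hP : ∀ i, ∑ j, P i j = 1) (α : ℝ) :
    srrwWeight P μ α μ = μ := by
  funext i
  simp [srrwWeight, div_self (hμ _), ← Finset.mul_sum, hP]

theorem hasFDerivAt_srrwWeight_self (hμ : ∀ i, μ i ≠ 0) (hP : ∀ i, ∑ j, P i j = 1)
    (hrev : ∀ i j, μ i * P i j = μ j * P j i) (α : ℝ) :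
    HasFDerivAt (srrwWeight P μ α) ((-α) • (Pᵀ + 1)).mulVecLin.toContinuousLinearMap μ := by
  rw [hasFDerivAt_pi']
  intro i
  have hterm := fun j => ((hasFDerivAt_rpow_apply_div_self (hμ i) (-α)).const_mul
    (μ i * P i j)).mul (hasFDerivAt_rpow_apply_div_self (hμ j) (-α))
  refine (HasFDerivAt.fun_sum fun j _ => hterm j).congr_fderiv ?_
  ext v
  have hrev' : ∀ j, μ i * P i j / μ j = P j i := fun j => by
    rw [hrev, mul_div_cancel_left₀ _ (hμ j)]
  have hterm_apply : ∀ j, μ i * P i j * (-α / μ j * v j) + μ i * P i j * (-α / μ i * v i) =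
      -α * (Pᵀ i j * v j) + -α * v i * P i j := fun j => by
    rw [transpose_apply, ← hrev' j]
    field_simp [hμ i]
  simp only [div_self (hμ _), Real.one_rpow, mul_one, one_smul, _root_.sum_apply,
    _root_.add_apply, _root_.smul_apply, ContinuousLinearMap.proj_apply, smul_eq_mul,
    ContinuousLinearMap.comp_apply, LinearMap.coe_toContinuousLinearMap', mulVecLin_apply,
    smul_mulVec, add_mulVec, one_mulVec, Pi.smul_apply, Pi.add_apply]
  rw [Finset.sum_congr rfl fun j _ => hterm_apply j, Finset.sum_add_distrib, ← Finset.mul_sum,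
    ← Finset.mul_sum, hP, mul_one, ← mul_add]
  rfl

theorem hasFDerivAt_srrwPi_self (hμ : ∀ i, μ i ≠ 0) (hP : ∀ i, ∑ j, P i j = 1)
    (hμ_sum : ∑ i, μ i = 1) (hrev : ∀ i j, μ i * P i j = μ j * P j i) (α : ℝ) :
    HasFDerivAt (srrwPi P μ α)
      ((2 * α) • vecMulVec μ (fun _ => (1 : ℝ)) - α • Pᵀ - α • 1).mulVecLin.toContinuousLinearMap
      μ := by
  have hn := hasFDerivAt_srrwWeight_self hμ hP hrev α
  have hS1 : ∑ i, srrwWeight P μ α μ i = 1 := by rw [srrwWeight_self hμ hP, hμ_sum]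
  have hinv := (hasDerivAt_inv (by rw [hS1]; exact one_ne_zero)).comp_hasFDerivAt μ
    (HasFDerivAt.fun_sum fun i _ => hasFDerivAt_pi'.1 hn i)
  have hA : (2 * α) • vecMulVec μ (fun _ => (1 : ℝ)) - α • Pᵀ - α • 1 =
      (2 * α) • vecMulVec μ (fun _ => (1 : ℝ)) + (-α) • (Pᵀ + 1) := by
    rw [smul_add, neg_smul, neg_smul]; abel
  rw [show srrwPi P μ α = _ from funext (srrwPi_eq_inv_sum_smul α), hA]
  refine (hinv.smul hn).congr_fderiv ?_
  ext v i
  have hvecMulVec : (vecMulVec μ fun _ => (1 : ℝ)) *ᵥ v = (∑ j, v j) • μ := by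
    ext i; simp [vecMulVec, mulVec, dotProduct, Finset.mul_sum, mul_comm]
  simp only [Function.comp_apply, srrwWeight_self hμ hP, hμ_sum, one_pow, inv_one, one_smul,
    _root_.add_apply, _root_.smul_apply, ContinuousLinearMap.smulRight_apply, _root_.sum_apply,
    ContinuousLinearMap.comp_apply, ContinuousLinearMap.proj_apply,
    LinearMap.coe_toContinuousLinearMap', mulVecLin_apply, smul_mulVec, add_mulVec, hvecMulVec,
    one_mulVec, Pi.add_apply, Pi.smul_apply, smul_eq_mul, ← Finset.mul_sum, Finset.sum_add_distrib,
    sum_transpose_mulVec hP]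
  ring

end

theorem srrw_pi_jacobian_at_target_general
    {N D : ℕ} (α : ℝ)
    (P : Matrix (Fin N) (Fin N) ℝ) (μ : Fin N → ℝ)
    (hP_rowsum : ∀ i, ∑ j, P i j = 1)
    (hμ_pos : ∀ i, 0 < μ i) (hμ_sum : ∑ i, μ i = 1)
    (hrev : ∀ i j, μ i * P i j = μ j * P j i)
    (Hbar : Matrix (Fin N) (Fin D) ℝ) (hHbar : Hbarᵀ *ᵥ μ = 0) :
    HasFDerivAt (srrwPi P μ α)
      (((2 * α) • vecMulVec μ (fun _ => (1 : ℝ)) - α • Pᵀ -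
          α • (1 : Matrix (Fin N) (Fin N) ℝ)).mulVecLin.toContinuousLinearMap) μ ∧
    ((2 * α) • vecMulVec μ (fun _ => (1 : ℝ)) - α • Pᵀ - α • (1 : Matrix (Fin N) (Fin N) ℝ)) -
        (1 : Matrix (Fin N) (Fin N) ℝ) =
      (2 * α) • vecMulVec μ (fun _ => (1 : ℝ)) - α • Pᵀ -
        (α + 1) • (1 : Matrix (Fin N) (Fin N) ℝ) ∧
    HasFDerivAt (fun x => Hbarᵀ *ᵥ (srrwPi P μ α x))
      (((-α) • (Hbarᵀ * (Pᵀ + 1))).mulVecLin.toContinuousLinearMap) μ := by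
  have hDπ := hasFDerivAt_srrwPi_self (fun i => (hμ_pos i).ne') hP_rowsum hμ_sum hrev α
  have hHbar_mul : Hbarᵀ * ((2 * α) • vecMulVec μ (fun _ => (1 : ℝ)) - α • Pᵀ - α • 1) =
      (-α) • (Hbarᵀ * (Pᵀ + 1)) := by
    rw [Matrix.mul_sub, Matrix.mul_sub, Matrix.mul_smul, Matrix.mul_smul, Matrix.mul_smul,
      mul_vecMulVec, hHbar, zero_vecMulVec, smul_zero, Matrix.mul_add, Matrix.mul_one, neg_smul, smul_add]
    abel
  refine ⟨hDπ, by rw [add_smul, one_smul, sub_sub], ?_⟩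
  simpa only [hHbar_mul] using hDπ.matrix_mulVec Hbarᵀ

/-- **Jacobian of the SRRW stationary distribution at the target.**
The map `π` is differentiable at `x = μ` with Jacobian `Dπ(μ) = 2α μ 1ᵀ − α Pᵀ − α I`;
consequently `Dπ(μ) − I = 2α μ 1ᵀ − α Pᵀ − (α+1) I`, and for any `H̄ ∈ ℝ^{N×D}` with
`H̄ᵀμ = 0`, the map `x ↦ H̄ᵀ π[x]` has derivative `−α H̄ᵀ(Pᵀ + I)` at `μ`. -/
theorem srrw_pi_jacobian_at_target
    {N D : ℕ} (hN : 2 ≤ N) (α : ℝ) (hα : 0 ≤ α)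
    (P : Matrix (Fin N) (Fin N) ℝ) (μ : Fin N → ℝ)
    (hP_nonneg : ∀ i j, 0 ≤ P i j) (hP_rowsum : ∀ i, ∑ j, P i j = 1)
    (hμ_pos : ∀ i, 0 < μ i) (hμ_sum : ∑ i, μ i = 1)
    (hrev : ∀ i j, μ i * P i j = μ j * P j i)
    (Hbar : Matrix (Fin N) (Fin D) ℝ) (hHbar : Hbarᵀ *ᵥ μ = 0) :
    HasFDerivAt (srrwPi P μ α)
      (((2 * α) • vecMulVec μ (fun _ => (1 : ℝ)) - α • Pᵀ -
          α • (1 : Matrix (Fin N) (Fin N) ℝ)).mulVecLin.toContinuousLinearMap) μ ∧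
    ((2 * α) • vecMulVec μ (fun _ => (1 : ℝ)) - α • Pᵀ - α • (1 : Matrix (Fin N) (Fin N) ℝ)) -
        (1 : Matrix (Fin N) (Fin N) ℝ) =
      (2 * α) • vecMulVec μ (fun _ => (1 : ℝ)) - α • Pᵀ -
        (α + 1) • (1 : Matrix (Fin N) (Fin N) ℝ) ∧
    HasFDerivAt (fun x => Hbarᵀ *ᵥ (srrwPi P μ α x))
      (((-α) • (Hbarᵀ * (Pᵀ + 1))).mulVecLin.toContinuousLinearMap) μ :=
  srrw_pi_jacobian_at_target_general α P μ hP_rowsum hμ_pos hμ_sum hrev Hbar hHbar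
end
end
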